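/- Let S and S^{(1)} be two simple symmetric random walks defined on a common probability space (not necessarily independent), with local times ξ, ξ^{(1)} and return times to zero ρ_j, ρ_j^{(1)} respectively. Then almost surely, for every integer N ≥ 1 and every integer n with 1 ≤ n ≤ ρ_N^{(1)}: max_{1≤i≤n} |ξ(0,i) − ξ^{(1)}(0,i)| ≤ max_{1≤j≤N} |ξ(0,ρ_j) − ξ(0,ρ_j^{(1)})| + 1. -/

import Mathlib

/-!
Almost surely `S` returns to zero infinitely often, so `ξ(0, ρ_j) = j` for every `j`. Let `M` be
the right-hand maximum, fix `1 ≤ i ≤ ρ⁽¹⁾_N` and put `b = ξ⁽¹⁾(0, i) ≤ N`. Then `ρ⁽¹⁾_b ≤ i`, and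
`i ≤ ρ⁽¹⁾_{b+1}` unless `b = N`, so by monotonicity `ξ(0, i)` lies between `ξ(0, ρ⁽¹⁾_b) ≥ b - M`
and `ξ(0, ρ⁽¹⁾_{min (b+1) N}) ≤ b + 1 + M`.

Recurrence: `limsup S = +∞` is a tail event, so it has probability `0` or `1`, and by symmetry
`liminf S = -∞` has the same probability. Runs of `L` up-steps occur almost surely for every `L`
(second Borel–Cantelli lemma), so `S` is almost surely unbounded on at least one side, hence on
both; with steps `±1` it then crosses zero infinitely often.
-/

open MeasureTheory ProbabilityTheory Filter
open scoped Classical ENNReal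

variable {Ω : Type*} [MeasurableSpace Ω]

/-- The walk `S n = X 1 + ⋯ + X n` built from the steps `X 1, X 2, …`. -/
def walk (X : ℕ → Ω → ℤ) (n : ℕ) (ω : Ω) : ℤ := ∑ i ∈ Finset.range n, X (i + 1) ω

/-- `X 1, X 2, …` are i.i.d. steps of a simple symmetric random walk:
independent, with `P(X i = 1) = P(X i = -1) = 1/2`. -/
def IsSSRW (P : Measure Ω) (X : ℕ → Ω → ℤ) : Prop :=
  (∀ i, Measurable (X i)) ∧
  iIndepFun X P ∧
  (∀ i, P {ω | X i ω = 1} = 1 / 2 ∧ P {ω | X i ω = -1} = 1 / 2)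

/-- Local time `ξ(k,n) = #{i : 1 ≤ i ≤ n, S i = k}` of the walk at site `k` up to time `n`. -/
noncomputable def localTime (X : ℕ → Ω → ℤ) (k : ℤ) (n : ℕ) (ω : Ω) : ℕ :=
  ((Finset.Icc 1 n).filter fun i => walk X i ω = k).card

/-- `ρ N`, the time of the `N`-th return of the walk to zero (the least time by which the walk
has visited `0` exactly `N` times). -/
noncomputable def rho (X : ℕ → Ω → ℤ) (N : ℕ) (ω : Ω) : ℕ :=
  sInf {n | localTime X 0 n ω = N}

/-- `ξ(k,n,↑)`: the number of upward excursions away from `k` completed up to time `n`,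
counted through their endpoints. -/
noncomputable def upCount (X : ℕ → Ω → ℤ) (k : ℤ) (n : ℕ) (ω : Ω) : ℕ :=
  ((Finset.Icc 1 n).filter fun b => ∃ a < b, walk X a ω = k ∧ walk X b ω = k ∧
      ∀ i, a < i → i < b → k < walk X i ω).card

/-- `ξ(k,n,↓)`: the number of downward excursions away from `k` completed up to time `n`,
counted through their endpoints. -/
noncomputable def downCount (X : ℕ → Ω → ℤ) (k : ℤ) (n : ℕ) (ω : Ω) : ℕ :=
  ((Finset.Icc 1 n).filter fun b => ∃ a < b, walk X a ω = k ∧ walk X b ω = k ∧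
      ∀ i, a < i → i < b → walk X i ω < k).card

/-- `ρ⁺ N`, the endpoint of the `N`-th upward excursion of the walk away from `0`. -/
noncomputable def rhoPlus (X : ℕ → Ω → ℤ) (N : ℕ) (ω : Ω) : ℕ :=
  sInf {n | upCount X 0 n ω = N}

/-- `τ_i^{(k)}`: `τ_0^{(k)} = 0` and
`τ_i^{(k)} = min {j > τ_{i-1}^{(k)} : S (j-1) = k, S j = k - 1}`. -/
noncomputable def tauRW (X : ℕ → Ω → ℤ) (k : ℤ) : ℕ → Ω → ℕ
  | 0 => fun _ => 0
  | i + 1 => fun ω =>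
      sInf {j | tauRW X k i ω < j ∧ walk X (j - 1) ω = k ∧ walk X j ω = k - 1}

/-- `T_i^{(k)} = ξ(k, τ_i^{(k)}) − ξ(k, τ_{i-1}^{(k)})`. -/
noncomputable def T (X : ℕ → Ω → ℤ) (k : ℤ) (i : ℕ) (ω : Ω) : ℕ :=
  localTime X k (tauRW X k i ω) ω - localTime X k (tauRW X k (i - 1) ω) ω

/-- `U^{(k)}(j) = T_1^{(k)} + ⋯ + T_j^{(k)} − 2 j`. -/
noncomputable def U (X : ℕ → Ω → ℤ) (k : ℤ) (j : ℕ) (ω : Ω) : ℤ :=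
  (∑ i ∈ Finset.Icc 1 j, (T X k i ω : ℤ)) - 2 * (j : ℤ)

/-- `κ n = max {i ≤ n : S i = 0}`, the last zero of the walk up to time `n`. -/
noncomputable def kappa (X : ℕ → Ω → ℤ) (n : ℕ) (ω : Ω) : ℕ :=
  sSup {i | i ≤ n ∧ walk X i ω = 0}


lemma Int.exists_eq_of_le_of_le_of_add_one_le {f : ℕ → ℤ} (hf : ∀ n, f (n + 1) ≤ f n + 1)
    {a b : ℕ} {c : ℤ} (hab : a ≤ b) (ha : f a ≤ c) (hb : c ≤ f b) :
    ∃ i, a ≤ i ∧ i ≤ b ∧ f i = c := by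
  induction b, hab using Nat.le_induction with
  | base => exact ⟨a, le_rfl, le_rfl, le_antisymm ha hb⟩
  | succ b hab ih =>
    by_cases hc : c ≤ f b
    · obtain ⟨i, hai, hib, hi⟩ := ih hc
      exact ⟨i, hai, hib.trans b.le_succ, hi⟩
    · exact ⟨b + 1, hab.trans b.le_succ, le_rfl, by linarith [hf b]⟩

section LocalTime

omit [MeasurableSpace Ω]

variable {X Y : ℕ → Ω → ℤ} {ω : Ω} {k : ℤ}

lemma walk_add (X : ℕ → Ω → ℤ) (n l : ℕ) (ω : Ω) :
    walk X (n + l) ω = walk X n ω + walk (fun i => X (n + i)) l ω :=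
  Finset.sum_range_add _ n l

lemma walk_succ (X : ℕ → Ω → ℤ) (n : ℕ) (ω : Ω) :
    walk X (n + 1) ω = walk X n ω + X (n + 1) ω :=
  Finset.sum_range_succ _ n

lemma walk_neg (X : ℕ → Ω → ℤ) (l : ℕ) (ω : Ω) :
    walk (fun i ω => -X i ω) l ω = -walk X l ω :=
  Finset.sum_neg_distrib _

lemma localTime_zero : localTime X k 0 ω = 0 := rfl

lemma localTime_succ (n : ℕ) :
    localTime X k (n + 1) ω = localTime X k n ω + if walk X (n + 1) ω = k then 1 else 0 := by
  rw [localTime, ← Finset.insert_Icc_right_eq_Icc_add_one (by omega), Finset.filter_insert]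
  split_ifs
  · exact Finset.card_insert_of_notMem (by simp)
  · rfl

lemma localTime_mono : Monotone (localTime X k · ω) := fun _ _ h =>
  Finset.card_le_card (Finset.filter_subset_filter _ (Finset.Icc_subset_Icc_right h))

lemma exists_localTime_eq_of_le {j m : ℕ} (h : j ≤ localTime X k m ω) :
    ∃ m' ≤ m, localTime X k m' ω = j := by
  obtain ⟨m', -, hm', hj⟩ := Int.exists_eq_of_le_of_le_of_add_one_le
    (f := fun n => (localTime X k n ω : ℤ)) (c := j)
    (fun n => by rw [localTime_succ]; split_ifs <;> simp)
    (Nat.zero_le m) (by simp [localTime_zero]) (by exact_mod_cast h)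
  exact ⟨m', hm', by exact_mod_cast hj⟩

lemma localTime_rho {j : ℕ} (h : ∃ m, localTime X 0 m ω = j) :
    localTime X 0 (rho X j ω) ω = j :=
  Nat.sInf_mem h

lemma rho_le {j m : ℕ} (h : localTime X 0 m ω = j) : rho X j ω ≤ m :=
  Nat.sInf_le h

lemma rho_zero : rho X 0 ω = 0 :=
  Nat.eq_zero_of_le_zero (rho_le localTime_zero)

lemma lt_rho {i j : ℕ} (hj : ∃ m, localTime X 0 m ω = j) (hi : localTime X 0 i ω < j) :
    i < rho X j ω := by
  by_contra! h
  have : j ≤ localTime X 0 i ω := localTime_rho hj ▸ localTime_mono (X := X) (k := 0) (ω := ω) h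
  omega

lemma exists_localTime_eq_of_rho_ne_zero {N : ℕ} (h : rho X N ω ≠ 0) :
    ∃ m, localTime X 0 m ω = N :=
  Nat.nonempty_of_pos_sInf (Nat.pos_of_ne_zero h)

lemma exists_localTime_eq_of_forall_exists_walk_eq (h : ∀ m, ∃ l, m < l ∧ walk X l ω = k)
    (j : ℕ) : ∃ m, localTime X k m ω = j := by
  suffices ∀ j, ∃ m, j ≤ localTime X k m ω from
    (this j).elim fun _ hm => (exists_localTime_eq_of_le hm).imp fun _ h => h.2
  intro j
  induction j with
  | zero => exact ⟨0, Nat.zero_le _⟩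
  | succ j ih =>
    obtain ⟨m, hm⟩ := ih
    obtain ⟨l, hml, hl⟩ := h m
    obtain ⟨l, rfl⟩ : ∃ l', l = l' + 1 := ⟨l - 1, by omega⟩
    refine ⟨l + 1, ?_⟩
    rw [localTime_succ, if_pos hl]
    exact Nat.succ_le_succ (hm.trans (localTime_mono (by omega)))

lemma abs_localTime_sub_localTime_le (hrec : ∀ j, ∃ m, localTime X 0 m ω = j) {N i : ℕ}
    (hi₀ : 1 ≤ i) (hiN : i ≤ rho Y N ω) {M : ℝ}
    (hM : ∀ j ∈ Finset.Icc 1 N,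
      |(localTime X 0 (rho X j ω) ω : ℝ) - (localTime X 0 (rho Y j ω) ω : ℝ)| ≤ M) :
    |(localTime X 0 i ω : ℝ) - (localTime Y 0 i ω : ℝ)| ≤ M + 1 := by
  have hN : ∃ m, localTime Y 0 m ω = N := exists_localTime_eq_of_rho_ne_zero (by omega)
  have hN₁ : 1 ≤ N := Nat.one_le_iff_ne_zero.2 fun h => by simp [h, rho_zero] at hiN; omega
  have hY : ∀ j ≤ N, ∃ m, localTime Y 0 m ω = j := fun j hj =>
    (exists_localTime_eq_of_le ((localTime_rho hN).symm ▸ hj)).imp fun _ h => h.2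
  have hM' : ∀ j, 1 ≤ j → j ≤ N → |(j : ℝ) - localTime X 0 (rho Y j ω) ω| ≤ M :=
    fun j h1 h2 => by simpa only [localTime_rho (hrec j)] using hM j (Finset.mem_Icc.2 ⟨h1, h2⟩)
  set a := localTime X 0 i ω
  set b := localTime Y 0 i ω
  have hbN : b ≤ N := localTime_rho hN ▸ localTime_mono hiN
  rw [abs_sub_le_iff]
  constructor
  · -- `i` precedes the `j`-th return of `Y` for `j = min (b + 1) N`.
    obtain ⟨j, hj₁, hjN, hjb, hij⟩ : ∃ j, 1 ≤ j ∧ j ≤ N ∧ j ≤ b + 1 ∧ i ≤ rho Y j ω := by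
      rcases lt_or_eq_of_le hbN with hb | hb
      · exact ⟨b + 1, by omega, hb, le_rfl, (lt_rho (hY _ hb) (by omega)).le⟩
      · exact ⟨N, hN₁, le_rfl, by omega, hiN⟩
    have ha : (a : ℝ) ≤ localTime X 0 (rho Y j ω) ω := by
      exact_mod_cast localTime_mono (X := X) (k := 0) (ω := ω) hij
    have hjb' : (j : ℝ) ≤ b + 1 := by exact_mod_cast hjb
    linarith [(abs_sub_le_iff.1 (hM' j hj₁ hjN)).2]
  · rcases Nat.eq_zero_or_pos b with hb | hb
    · have hM₀ : 0 ≤ M := (abs_nonneg _).trans (hM' 1 le_rfl hN₁)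
      have ha : (0 : ℝ) ≤ a := Nat.cast_nonneg a
      rw [hb, Nat.cast_zero]
      linarith
    · have ha : (localTime X 0 (rho Y b ω) ω : ℝ) ≤ a := by
        exact_mod_cast localTime_mono (X := X) (k := 0) (ω := ω) (rho_le (X := Y) (m := i) rfl)
      linarith [(abs_sub_le_iff.1 (hM' b hb hbN)).1]

end LocalTime

lemma bddAbove_range_nat_add_iff {α : Type*} [LinearOrder α] {f : ℕ → α} (n : ℕ) :
    BddAbove (Set.range fun l => f (n + l)) ↔ BddAbove (Set.range f) := by
  refine ⟨fun h => ?_, fun h => h.mono (Set.range_subset_iff.2 fun l => Set.mem_range_self _)⟩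
  have : Nonempty α := ⟨f 0⟩
  refine (((Set.finite_Iio n).image f).bddAbove.union h).mono ?_
  rintro _ ⟨l, rfl⟩
  rcases lt_or_ge l n with hl | hl
  · exact Or.inl ⟨l, hl, rfl⟩
  · exact Or.inr ⟨l - n, congrArg f (Nat.add_sub_cancel' hl)⟩

lemma bddAbove_range_const_add_iff {ι : Type*} {f : ι → ℤ} (c : ℤ) :
    BddAbove (Set.range fun l => c + f l) ↔ BddAbove (Set.range f) := by
  rw [show (fun l => c + f l) = OrderIso.addLeft c ∘ f from rfl, Set.range_comp,
    OrderIso.bddAbove_image]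

lemma pairwise_disjoint_Ioc_mul_add (L : ℕ) :
    Pairwise (Function.onFun Disjoint fun m => Finset.Ioc (m * L) (m * L + L)) := by
  intro m m' hmm'
  refine Finset.disjoint_left.2 fun j hj hj' => hmm' ?_
  rw [Finset.mem_Ioc] at hj hj'
  rw [← Nat.div_eq_of_lt_le (m := j - 1) (n := L) (k := m) (by omega) (by rw [add_one_mul]; omega),
    Nat.div_eq_of_lt_le (m := j - 1) (n := L) (k := m') (by omega) (by rw [add_one_mul]; omega)]

section WalkUnbddAbove

omit [MeasurableSpace Ω]

def walkUnbddAbove (X : ℕ → Ω → ℤ) : Set Ω :=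
  {ω | ¬BddAbove (Set.range fun l => walk X l ω)}

variable {X : ℕ → Ω → ℤ}

lemma walkUnbddAbove_eq_shift (X : ℕ → Ω → ℤ) (n : ℕ) :
    walkUnbddAbove X = walkUnbddAbove (fun i => X (n + i)) := by
  ext ω
  simp only [walkUnbddAbove, Set.mem_ofPred_eq,
    ← bddAbove_range_nat_add_iff (f := (walk X · ω)) n, walk_add, bddAbove_range_const_add_iff]

lemma measurableSet_walkUnbddAbove {mΩ : MeasurableSpace Ω} (hX : ∀ i, Measurable (X i)) :
    MeasurableSet (walkUnbddAbove X) :=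
  (measurableSet_bddAbove_range fun l =>
    Finset.measurable_sum (Finset.range l) fun i _ => hX (i + 1)).compl

lemma exists_walk_eq_zero_of_mem_walkUnbddAbove {ω : Ω} (hstep : ∀ i, X i ω = 1 ∨ X i ω = -1)
    (hup : ω ∈ walkUnbddAbove X) (hdown : ω ∈ walkUnbddAbove (fun i ω => -X i ω)) (m : ℕ) :
    ∃ l, m < l ∧ walk X l ω = 0 := by
  obtain ⟨_, ⟨a, rfl⟩, ha⟩ := not_bddAbove_iff.1
    ((bddAbove_range_nat_add_iff (m + 1)).not.2 hdown) 0
  obtain ⟨_, ⟨b, rfl⟩, hb⟩ := not_bddAbove_iff.1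
    ((bddAbove_range_nat_add_iff (m + 1 + a)).not.2 hup) 0
  have ha' : walk X (m + 1 + a) ω ≤ 0 := by
    simp only [walk_neg, neg_pos] at ha
    exact ha.le
  obtain ⟨l, hl, -, hl0⟩ := Int.exists_eq_of_le_of_le_of_add_one_le
    (f := (walk X · ω)) (fun n => by rcases hstep (n + 1) with h | h <;> simp [walk_succ, h])
    (Nat.le_add_right _ b) ha' hb.le
  exact ⟨l, by omega, hl0⟩

end WalkUnbddAbove

namespace IsSSRW

variable {P : Measure Ω} {X : ℕ → Ω → ℤ}

lemma isProbabilityMeasure (hX : IsSSRW P X) : IsProbabilityMeasure P :=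
  hX.2.1.isProbabilityMeasure

lemma ae_eq_one_or_eq_neg_one (hX : IsSSRW P X) : ∀ᵐ ω ∂P, ∀ i, X i ω = 1 ∨ X i ω = -1 := by
  have := hX.isProbabilityMeasure
  refine ae_all_iff.2 fun i => (mem_ae_iff_prob_eq_one ?_).2 ?_
  · exact ((hX.1 i) (measurableSet_singleton 1)).union ((hX.1 i) (measurableSet_singleton (-1)))
  · have hm : MeasurableSet {ω | X i ω = -1} := (hX.1 i) (measurableSet_singleton (-1))
    rw [Set.ofPred_or, measure_union _ hm, (hX.2.2 i).1, (hX.2.2 i).2, ENNReal.add_halves]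
    exact Set.disjoint_left.2 fun ω h1 h2 => by simp_all

lemma measure_preimage_neg (hX : IsSSRW P X) (i : ℕ) (c : ℤ) :
    P (X i ⁻¹' {-c}) = P (X i ⁻¹' {c}) := by
  by_cases hc : c = 1 ∨ c = -1
  · rcases hc with rfl | rfl
    · exact (hX.2.2 i).2.trans (hX.2.2 i).1.symm
    · change P {ω | X i ω = -(-1)} = P {ω | X i ω = -1}
      rw [neg_neg]
      exact (hX.2.2 i).1.trans (hX.2.2 i).2.symm
  · have hnull : ∀ d : ℤ, d ≠ 1 → d ≠ -1 → P (X i ⁻¹' {d}) = 0 := fun d h1 h2 =>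
      measure_eq_zero_iff_ae_notMem.2 <| hX.ae_eq_one_or_eq_neg_one.mono fun ω h hd => by
        rcases h i with h | h <;> simp_all
    push Not at hc
    rw [hnull c hc.1 hc.2, hnull (-c) (by omega) (by omega)]

lemma map_fun_neg_eq (hX : IsSSRW P X) :
    P.map (fun ω i => -X i ω) = P.map (fun ω i => X i ω) := by
  have hneg : iIndepFun (fun i ω => -X i ω) P :=
    hX.2.1.comp (fun _ => Neg.neg) fun _ => measurable_neg
  refine (hneg.map_fun_eq_infinitePi_map fun i => (hX.1 i).neg).trans ?_
  rw [hX.2.1.map_fun_eq_infinitePi_map hX.1]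
  congr 1
  funext i
  refine Measure.ext_iff_singleton.2 fun c => ?_
  rw [Measure.map_apply (hX.1 i).neg (measurableSet_singleton c),
    Measure.map_apply (hX.1 i) (measurableSet_singleton c), ← hX.measure_preimage_neg i c]
  congr 1
  ext ω
  simp [neg_eq_iff_eq_neg]

lemma measure_walkUnbddAbove_neg (hX : IsSSRW P X) :
    P (walkUnbddAbove fun i ω => -X i ω) = P (walkUnbddAbove X) := by
  have hC : MeasurableSet (walkUnbddAbove fun i (x : ℕ → ℤ) => x i) :=
    measurableSet_walkUnbddAbove measurable_pi_apply
  have hmeas : ∀ Z : ℕ → Ω → ℤ, (∀ i, Measurable (Z i)) →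
      P (walkUnbddAbove Z) = P.map (fun ω i => Z i ω) (walkUnbddAbove fun i x => x i) :=
    fun Z hZ => (Measure.map_apply (measurable_pi_lambda _ hZ) hC).symm
  rw [hmeas (fun i ω => -X i ω) fun i => (hX.1 i).neg, hmeas X hX.1, hX.map_fun_neg_eq]

lemma measure_walkUnbddAbove_eq_zero_or_one (hX : IsSSRW P X) :
    P (walkUnbddAbove X) = 0 ∨ P (walkUnbddAbove X) = 1 := by
  refine measure_zero_or_one_of_measurableSet_limsup_atTop (fun n => (hX.1 n).comap_le)
    hX.2.1.iIndep ?_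
  rw [limsup_eq_iInf_iSup_of_nat, MeasurableSpace.measurableSet_iInf]
  intro n
  rw [walkUnbddAbove_eq_shift X n]
  exact measurableSet_walkUnbddAbove fun i => Measurable.of_comap_le <|
    le_iSup₂ (f := fun j (_ : j ≥ n) => MeasurableSpace.comap (X j) inferInstance) (n + i)
      (Nat.le_add_right n i)

lemma ae_exists_walk_add_eq (hX : IsSSRW P X) (L : ℕ) :
    ∀ᵐ ω ∂P, ∃ n, walk X (n + L) ω = walk X n ω + L := by
  have := hX.isProbabilityMeasure
  let B : ℕ → Finset ℕ := fun m => Finset.Ioc (m * L) (m * L + L)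
  let A : ℕ → Set Ω := fun m => ⋂ j ∈ B m, {ω | X j ω = 1}
  have hmeas₁ : ∀ j, MeasurableSet {ω | X j ω = 1} := fun j => hX.1 j (measurableSet_singleton 1)
  have hA : ∀ m, MeasurableSet (A m) := fun m => Finset.measurableSet_biInter _ fun j _ => hmeas₁ j
  have hprob : ∀ s : Finset ℕ, P (⋂ j ∈ s, {ω | X j ω = 1}) = (1 / 2) ^ s.card := fun s => by
    rw [hX.2.1.meas_biInter (s := fun j => {ω | X j ω = 1})
        fun j _ => comap_measurable (X j) (measurableSet_singleton 1),
      Finset.prod_congr rfl fun j _ => (hX.2.2 j).1, Finset.prod_const]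
  have hindep : iIndepSet A P := (iIndepSet_iff_meas_biInter hA).2 fun S => by
    rw [← Finset.set_biInter_biUnion, hprob,
      Finset.card_biUnion ((pairwise_disjoint_Ioc_mul_add L).set_pairwise _),
      ← Finset.prod_pow_eq_pow_sum]
    exact Finset.prod_congr rfl fun m _ => (hprob (B m)).symm
  have hsum : ∑' m, P (A m) = ∞ := by
    simp only [A, hprob, B, Nat.card_Ioc, Nat.add_sub_cancel_left]
    exact ENNReal.tsum_const_eq_top_of_ne_zero (by simp)
  filter_upwards [(mem_ae_iff_prob_eq_one (MeasurableSet.measurableSet_limsup hA)).2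
    (measure_limsup_eq_one hA hindep hsum)] with ω hω
  obtain ⟨m, hm⟩ := (mem_limsup_iff_frequently_mem.1 hω).exists
  refine ⟨m * L, ?_⟩
  have hblock : ∀ r ∈ Finset.range L, X (m * L + (r + 1)) ω = 1 := fun r hr =>
    Set.mem_iInter₂.1 hm _ (Finset.mem_Ioc.2 ⟨by omega, by simp at hr; omega⟩)
  rw [walk_add]
  congr 1
  simp only [walk]
  rw [Finset.sum_congr rfl hblock]
  simp

lemma ae_mem_walkUnbddAbove (hX : IsSSRW P X) :
    ∀ᵐ ω ∂P, ω ∈ walkUnbddAbove X ∧ ω ∈ walkUnbddAbove (fun i ω => -X i ω) := by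
  have := hX.isProbabilityMeasure
  have hcover : ∀ᵐ ω ∂P, ω ∈ walkUnbddAbove X ∨ ω ∈ walkUnbddAbove (fun i ω => -X i ω) := by
    filter_upwards [ae_all_iff.2 hX.ae_exists_walk_add_eq] with ω hω
    by_contra! h
    obtain ⟨K₁, hK₁⟩ : BddAbove (Set.range fun l => walk X l ω) := not_not.1 h.1
    obtain ⟨K₂, hK₂⟩ : BddAbove (Set.range fun l => walk (fun i ω => -X i ω) l ω) :=
      not_not.1 h.2
    obtain ⟨n, hn⟩ := hω ((K₁ + K₂).toNat + 1)
    have h₁ : walk X (n + ((K₁ + K₂).toNat + 1)) ω ≤ K₁ := hK₁ ⟨_, rfl⟩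
    have h₂ : -walk X n ω ≤ K₂ := walk_neg X n ω ▸ hK₂ ⟨n, rfl⟩
    have := Int.self_le_toNat (K₁ + K₂)
    push_cast at hn
    omega
  rcases hX.measure_walkUnbddAbove_eq_zero_or_one with h0 | h1
  · have h0' := hX.measure_walkUnbddAbove_neg.trans h0
    obtain ⟨ω, ⟨hω, h⟩, h'⟩ := ((hcover.and (measure_eq_zero_iff_ae_notMem.1 h0)).and
      (measure_eq_zero_iff_ae_notMem.1 h0')).exists
    tauto
  · have h1' := hX.measure_walkUnbddAbove_neg.trans h1
    exact Filter.inter_mem ((mem_ae_iff_prob_eq_one (measurableSet_walkUnbddAbove hX.1)).2 h1)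
      ((mem_ae_iff_prob_eq_one (measurableSet_walkUnbddAbove fun i => (hX.1 i).neg)).2 h1')

lemma ae_exists_localTime_eq (hX : IsSSRW P X) :
    ∀ᵐ ω ∂P, ∀ j, ∃ m, localTime X 0 m ω = j := by
  filter_upwards [hX.ae_eq_one_or_eq_neg_one, hX.ae_mem_walkUnbddAbove] with ω hstep hω
  exact exists_localTime_eq_of_forall_exists_walk_eq
    (exists_walk_eq_zero_of_mem_walkUnbddAbove hstep hω.1 hω.2)

end IsSSRW

lemma le_biSup_finset {ι : Type*} (s : Finset ι) (f : ι → ℝ) : ∀ i ∈ s, f i ≤ ⨆ j ∈ s, f j :=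
  le_ciSup₂ (f := fun j (_ : j ∈ s) => f j) ((s.finite_toSet.image f).bddAbove.mono
    (Set.iUnion_subset fun _ => Set.range_subset_iff.2 fun hj => Set.mem_image_of_mem f hj))

theorem statement16_general (P : Measure Ω) (X X1 : ℕ → Ω → ℤ)
    (hX : IsSSRW P X) :
    ∀ᵐ ω ∂P, ∀ N : ℕ, 1 ≤ N → ∀ n : ℕ, 1 ≤ n → n ≤ rho X1 N ω →
      (⨆ i ∈ Finset.Icc 1 n,
          |(localTime X 0 i ω : ℝ) - (localTime X1 0 i ω : ℝ)|)
        ≤ (⨆ j ∈ Finset.Icc 1 N,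
            |(localTime X 0 (rho X j ω) ω : ℝ) - (localTime X 0 (rho X1 j ω) ω : ℝ)|)
          + 1 := by
  filter_upwards [hX.ae_exists_localTime_eq] with ω hrec
  intro N _ n _ hnN
  have hM₀ : 0 ≤ ⨆ j ∈ Finset.Icc 1 N,
      |(localTime X 0 (rho X j ω) ω : ℝ) - (localTime X 0 (rho X1 j ω) ω : ℝ)| :=
    Real.iSup_nonneg fun _ => Real.iSup_nonneg fun _ => abs_nonneg _
  refine Real.iSup_le (fun i => Real.iSup_le (fun hi => ?_) (by linarith)) (by linarith)
  rw [Finset.mem_Icc] at hi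
  exact abs_localTime_sub_localTime_le hrec hi.1 (hi.2.trans hnN) (le_biSup_finset _ _)

/-- Let `S` (with steps `X`) and `S⁽¹⁾` (with steps `X1`) be two simple symmetric random walks
on a common probability space, with local times `ξ`, `ξ⁽¹⁾` and return times to zero `ρ`,
`ρ⁽¹⁾`. Then almost surely, for every `N ≥ 1` and every `1 ≤ n ≤ ρ⁽¹⁾_N`,
`max_{1≤i≤n} |ξ(0,i) − ξ⁽¹⁾(0,i)| ≤ max_{1≤j≤N} |ξ(0,ρ_j) − ξ(0,ρ⁽¹⁾_j)| + 1`. -/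
theorem statement16 (P : Measure Ω) [IsProbabilityMeasure P] (X X1 : ℕ → Ω → ℤ)
    (hX : IsSSRW P X) (hX1 : IsSSRW P X1) :
    ∀ᵐ ω ∂P, ∀ N : ℕ, 1 ≤ N → ∀ n : ℕ, 1 ≤ n → n ≤ rho X1 N ω →
      (⨆ i ∈ Finset.Icc 1 n,
          |(localTime X 0 i ω : ℝ) - (localTime X1 0 i ω : ℝ)|)
        ≤ (⨆ j ∈ Finset.Icc 1 N,
            |(localTime X 0 (rho X j ω) ω : ℝ) - (localTime X 0 (rho X1 j ω) ω : ℝ)|)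
          + 1 :=
  statement16_general P X X1 hX
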